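/- Let P be a finite poset and (x₁, x₂, …, xₙ) any linear extension of P. Then birational antichain rowmotion BAR = τ_{xₙ} ∘ ⋯ ∘ τ_{x₂} ∘ τ_{x₁} equals the composition ∇ ∘ Θ ∘ Δ⁻¹ of the birational transfer maps: for every positive labeling g of P, τ_{xₙ}(⋯(τ_{x₂}(τ_{x₁}(g)))⋯) = ∇(Θ(Δ⁻¹(g))). -/

import Mathlib

/-!
Birational (commutative) antichain/order rowmotion on a finite poset `P`, with labels in `ℝ`
and positive labelings, following Joseph–Roby, "Birational and noncommutative lifts of
antichain toggling and rowmotion".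
-/

open Finset

attribute [local instance] Classical.propDecidable

variable {P : Type*} [Fintype P] [PartialOrder P]

/-- `c` is a saturated chain in `P`: consecutive entries are covers. -/
def SatChain {P : Type*} [PartialOrder P] {k : ℕ} (c : Fin (k + 1) → P) : Prop :=
  ∀ i : Fin k, c i.castSucc ⋖ c i.succ

/-- `c` is a maximal chain of `P`: a saturated chain from a minimal element to a maximal
element of `P` (equivalently, the restriction to `P` of a maximal chain
`0̂ ⋖ y₁ ⋖ ⋯ ⋖ y_k ⋖ 1̂` of `P̂`). -/
def MaxChain {P : Type*} [PartialOrder P] {k : ℕ} (c : Fin (k + 1) → P) : Prop :=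
  SatChain c ∧ IsMin (c 0) ∧ IsMax (c (Fin.last k))

/-- `Υ_v(g)`: the sum over all maximal chains `(y₁, …, y_k)` of `P` through `v` of the
products `g(y₁)⋯g(y_k)` of the labels along the chain. -/
noncomputable def Upsilon (g : P → ℝ) (v : P) : ℝ :=
  ∑ k ∈ range (Fintype.card P),
    ∑ c ∈ univ.filter (fun c : Fin (k + 1) → P => MaxChain c ∧ ∃ j, c j = v),
      (List.ofFn (g ∘ c)).prod

/-- The birational antichain toggle `τ_v`: it replaces the label at `v` by `C / Υ_v(g)` and
fixes all other labels. -/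
noncomputable def atog (C : ℝ) (v : P) (g : P → ℝ) : P → ℝ :=
  fun x => if x = v then C / Upsilon g v else g x

/-- `∑_{y ∈ P̂, y ⋖ x} f(y)`, with the convention `f(0̂) = 1` (the unique lower cover in
`P̂` of a minimal element of `P` is `0̂`). -/
noncomputable def lowSum (f : P → ℝ) (x : P) : ℝ :=
  (if IsMin x then 1 else 0) + ∑ y ∈ univ.filter (fun y => y ⋖ x), f y

/-- `∑_{y ∈ P̂, y ⋗ x} 1/f(y)`, with the convention `f(1̂) = C`. -/
noncomputable def upInvSum (C : ℝ) (f : P → ℝ) (x : P) : ℝ :=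
  (if IsMax x then 1 / C else 0) + ∑ y ∈ univ.filter (fun y => x ⋖ y), 1 / f y

/-- The birational order toggle `T_v`: it replaces the label at `v` by
`(∑_{y ∈ P̂, y ⋖ v} f(y)) / (f(v) · ∑_{y ∈ P̂, y ⋗ v} 1/f(y))` (with `f(0̂) = 1`,
`f(1̂) = C`) and fixes all other labels. -/
noncomputable def otog (C : ℝ) (v : P) (f : P → ℝ) : P → ℝ :=
  fun x => if x = v then lowSum f v / (f v * upInvSum C f v) else f x

/-- The birational complement map `Θ`: `(Θf)(x) = C / f(x)`. -/
noncomputable def thetaMap (C : ℝ) (f : P → ℝ) : P → ℝ := fun x => C / f x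

/-- The birational down transfer `∇`: `(∇f)(x) = f(x) / ∑_{y ∈ P̂, y ⋖ x} f(y)` with
`f(0̂) = 1`. -/
noncomputable def nablaMap (f : P → ℝ) : P → ℝ := fun x => f x / lowSum f x

/-- The birational inverse up transfer `Δ⁻¹`: `(Δ⁻¹f)(x)` is the sum, over all saturated
chains `x = y₁ ⋖ y₂ ⋖ ⋯ ⋖ y_k ⋖ 1̂` in `P̂` (i.e. saturated chains of `P` starting at `x`
and ending at a maximal element of `P`), of `f(y₁)f(y₂)⋯f(y_k)`. -/
noncomputable def deltaInvMap (f : P → ℝ) : P → ℝ := fun x =>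
  ∑ k ∈ range (Fintype.card P),
    ∑ c ∈ univ.filter (fun c : Fin (k + 1) → P =>
        SatChain c ∧ c 0 = x ∧ IsMax (c (Fin.last k))),
      (List.ofFn (f ∘ c)).prod

/-- `l` is a linear extension of `P`: it lists every element of `P` exactly once, and
`l[i] < l[j]` in `P` implies `i < j`. -/
def IsLinearExtension {P : Type*} [PartialOrder P] (l : List P) : Prop :=
  l.Nodup ∧ (∀ x : P, x ∈ l) ∧
    ∀ (i j : ℕ) (hi : i < l.length) (hj : j < l.length), l[i]'hi < l[j]'hj → i < j

/-- `l` is a linear extension of the subposet `A` of `P`. -/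
def IsLinearExtensionOn {P : Type*} [PartialOrder P] (A : Set P) (l : List P) : Prop :=
  l.Nodup ∧ (∀ x : P, x ∈ l ↔ x ∈ A) ∧
    ∀ (i j : ℕ) (hi : i < l.length) (hj : j < l.length), l[i]'hi < l[j]'hj → i < j

/-- Apply the antichain toggles `τ` along the list `l`, first element of `l` first; for a
linear extension `l = (x₁,…,xₙ)` this is `τ_{xₙ} ∘ ⋯ ∘ τ_{x₂} ∘ τ_{x₁}`, i.e. birational
antichain rowmotion `BAR`. -/
noncomputable def applyATogs (C : ℝ) (l : List P) (g : P → ℝ) : P → ℝ :=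
  l.foldl (fun h v => atog C v h) g

/-- Apply the order toggles `T` along the list `l`, first element of `l` first. -/
noncomputable def applyOTogs (C : ℝ) (l : List P) (f : P → ℝ) : P → ℝ :=
  l.foldl (fun h v => otog C v h) f

/-- `rk` is a rank function exhibiting `P` as a graded poset of rank `r`: minimal elements
have rank `0`, ranks increase by `1` along covers, and maximal elements have rank `r`. -/
def IsRankFunction {P : Type*} [PartialOrder P] (rk : P → ℕ) (r : ℕ) : Prop :=
  (∀ x : P, IsMin x → rk x = 0) ∧ (∀ x y : P, x ⋖ y → rk y = rk x + 1) ∧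
    (∀ x : P, IsMax x → rk x = r)

/-!
After toggling `x₁, …, xᵢ` the labeling equals `t = ∇ΘΔ⁻¹g` on `{x₁, …, xᵢ}` and `g`
elsewhere. To toggle `v = xᵢ₊₁`, split every maximal chain through `v` at `v`: this gives
`Υ_v(h) · h(v) = ∇⁻¹h(v) · Δ⁻¹h(v)`, where `∇⁻¹h(v)` sums the weights of the saturated chains
from a minimal element up to `v`. As `h = g` above `v`, `Δ⁻¹h(v) = Δ⁻¹g(v)`; as `h = ∇(ΘΔ⁻¹g)`
strictly below `v` and `∇⁻¹` inverts `∇`, `∇⁻¹h(v) = h(v) · ∑_{y ⋖ v} (ΘΔ⁻¹g)(y)` (summed over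
`P̂`, with label `1` at `0̂`). Hence the new label `C / Υ_v(h)` is `t(v)`.
-/

omit [Fintype P] in
lemma SatChain.strictMono {k : ℕ} {c : Fin (k + 1) → P} (h : SatChain c) : StrictMono c :=
  Fin.strictMono_iff_lt_succ.2 fun i => (h i).lt

lemma SatChain.length_le_card {k : ℕ} {c : Fin (k + 1) → P} (h : SatChain c) :
    k + 1 ≤ Fintype.card P := by
  simpa using Fintype.card_le_of_injective c h.strictMono.injective

omit [Fintype P] in
lemma satChain_cons_iff {k : ℕ} {x : P} {c : Fin (k + 1) → P} :
    SatChain (Fin.cons x c : Fin (k + 2) → P) ↔ x ⋖ c 0 ∧ SatChain c := by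
  simp only [SatChain, Fin.forall_fin_succ, ← Fin.succ_castSucc, Fin.cons_succ]
  rfl

noncomputable def chainSum (f : P → ℝ) (Q : ∀ k : ℕ, (Fin (k + 1) → P) → Prop) (x : P) : ℝ :=
  ∑ k ∈ range (Fintype.card P),
    ∑ c ∈ univ.filter (fun c : Fin (k + 1) → P => SatChain c ∧ c 0 = x ∧ Q k c),
      (List.ofFn (f ∘ c)).prod

section chainSum

variable (f : P → ℝ) (Q : ∀ k : ℕ, (Fin (k + 1) → P) → Prop) (x : P)

lemma sum_satChain_one :
    ∑ c ∈ univ.filter (fun c : Fin 1 → P => SatChain c ∧ c 0 = x ∧ Q 0 c),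
      (List.ofFn (f ∘ c)).prod = if Q 0 (fun _ => x) then f x else 0 := by
  rw [Finset.sum_filter, Fintype.sum_eq_single (fun _ => x)]
  · simp [SatChain]
  · intro c hc
    rw [if_neg]
    rintro ⟨-, hc0, -⟩
    exact hc (funext fun i => by rw [Subsingleton.elim i 0, hc0])

lemma sum_satChain_succ_eq_sum_cons
    (hQ : ∀ k (c : Fin (k + 2) → P), c 0 = x → SatChain c → (Q (k + 1) c ↔ Q k (Fin.tail c)))
    (k : ℕ) :
    ∑ c ∈ univ.filter (fun c : Fin (k + 2) → P => SatChain c ∧ c 0 = x ∧ Q (k + 1) c),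
        (List.ofFn (f ∘ c)).prod
      = ∑ c ∈ univ.filter (fun c : Fin (k + 1) → P => x ⋖ c 0 ∧ SatChain c ∧ Q k c),
          f x * (List.ofFn (f ∘ c)).prod := by
  refine Finset.sum_nbij' Fin.tail (fun c => (Fin.cons x c : Fin (k + 2) → P)) ?_ ?_ ?_ ?_ ?_
  · intro c hc
    simp only [mem_filter, mem_univ, true_and] at hc ⊢
    obtain ⟨hsc, hc0, hq⟩ := hc
    rw [hQ k c hc0 hsc] at hq
    rw [← Fin.cons_self_tail c, hc0, satChain_cons_iff] at hsc
    exact ⟨hsc.1, hsc.2, hq⟩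
  · intro c hc
    simp only [mem_filter, mem_univ, true_and] at hc ⊢
    obtain ⟨hx, hsc, hq⟩ := hc
    have hsc' := satChain_cons_iff.2 ⟨hx, hsc⟩
    exact ⟨hsc', rfl, (hQ k _ rfl hsc').2 hq⟩
  · intro c hc
    simp only [mem_filter, mem_univ, true_and] at hc
    rw [← hc.2.1, Fin.cons_self_tail]
  · intro c _
    exact Fin.tail_cons _ _
  · intro c hc
    simp only [mem_filter, mem_univ, true_and] at hc
    rw [List.ofFn_succ, List.prod_cons]
    simp [hc.2.1, Fin.tail]

lemma sum_satChain_succ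
    (hQ : ∀ k (c : Fin (k + 2) → P), c 0 = x → SatChain c → (Q (k + 1) c ↔ Q k (Fin.tail c)))
    (k : ℕ) :
    ∑ c ∈ univ.filter (fun c : Fin (k + 2) → P => SatChain c ∧ c 0 = x ∧ Q (k + 1) c),
        (List.ofFn (f ∘ c)).prod
      = f x * ∑ y ∈ univ.filter (x ⋖ ·),
          ∑ c ∈ univ.filter (fun c : Fin (k + 1) → P => SatChain c ∧ c 0 = y ∧ Q k c),
            (List.ofFn (f ∘ c)).prod := by
  rw [sum_satChain_succ_eq_sum_cons f Q x hQ, ← Finset.mul_sum,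
    ← Finset.sum_fiberwise_of_maps_to (t := univ.filter (x ⋖ ·)) (g := fun c => c 0)
      (fun c hc => mem_filter.2 ⟨mem_univ _, (mem_filter.1 hc).2.1⟩)]
  congr 1
  refine Finset.sum_congr rfl fun y hy => Finset.sum_congr ?_ fun _ _ => rfl
  ext c
  simp only [mem_filter, mem_univ, true_and] at hy ⊢
  constructor
  · rintro ⟨⟨-, hsc, hq⟩, rfl⟩
    exact ⟨hsc, rfl, hq⟩
  · rintro ⟨hsc, rfl, hq⟩
    exact ⟨⟨hy, hsc, hq⟩, rfl⟩

theorem chainSum_eq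
    (hQ : ∀ k (c : Fin (k + 2) → P), c 0 = x → SatChain c → (Q (k + 1) c ↔ Q k (Fin.tail c))) :
    chainSum f Q x
      = (if Q 0 (fun _ => x) then f x else 0)
        + f x * ∑ y ∈ univ.filter (x ⋖ ·), chainSum f Q y := by
  obtain ⟨n, hn⟩ : ∃ n, Fintype.card P = n + 1 :=
    Nat.exists_eq_add_one_of_ne_zero (Fintype.card_pos_iff.2 ⟨x⟩).ne'
  have hlong : ∀ y, x ⋖ y →
      ∑ c ∈ univ.filter (fun c : Fin (n + 1) → P => SatChain c ∧ c 0 = y ∧ Q n c),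
        (List.ofFn (f ∘ c)).prod = 0 := by
    refine fun y hy => Finset.sum_eq_zero fun c hc => absurd ?_ (Nat.lt_irrefl (n + 1))
    simp only [mem_filter, mem_univ, true_and] at hc
    have := (satChain_cons_iff (x := x)).2 ⟨hc.2.1 ▸ hy, hc.1⟩
    simpa [hn] using this.length_le_card
  rw [chainSum, hn, Finset.sum_range_succ', sum_satChain_one, add_comm]
  simp only [sum_satChain_succ f Q x hQ, ← Finset.mul_sum]
  rw [Finset.sum_comm]
  congr 2
  refine Finset.sum_congr rfl fun y hy => ?_
  rw [chainSum, hn, Finset.sum_range_succ, hlong y (by simpa using hy), add_zero]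

end chainSum

lemma deltaInvMap_unfold (f : P → ℝ) (x : P) :
    deltaInvMap f x
      = (if IsMax x then f x else 0) + f x * ∑ y ∈ univ.filter (x ⋖ ·), deltaInvMap f y :=
  chainSum_eq f (fun k c => IsMax (c (Fin.last k))) x fun k c _ _ => by
    simp [Fin.tail, Fin.succ_last]

noncomputable def chainSumTo (f : P → ℝ) (v : P) : P → ℝ :=
  chainSum f (fun k c => c (Fin.last k) = v)

noncomputable def chainSumThrough (f : P → ℝ) (v : P) : P → ℝ :=
  chainSum f (fun k c => IsMax (c (Fin.last k)) ∧ ∃ j, c j = v)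

section chainSumTo

variable (f : P → ℝ) (v : P)

lemma chainSumTo_unfold (x : P) :
    chainSumTo f v x
      = (if x = v then f x else 0) + f x * ∑ y ∈ univ.filter (x ⋖ ·), chainSumTo f v y :=
  chainSum_eq f _ x fun k c _ _ => by simp [Fin.tail, Fin.succ_last]

lemma chainSumTo_eq_zero {x : P} (h : ¬ x ≤ v) : chainSumTo f v x = 0 := by
  induction x using WellFoundedGT.induction with
  | _ x ih =>
    rw [chainSumTo_unfold, if_neg (fun hxv => h hxv.le), zero_add]
    refine mul_eq_zero_of_right _ (Finset.sum_eq_zero fun y hy => ih y ?_ ?_)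
    all_goals simp only [mem_filter, mem_univ, true_and] at hy
    · exact hy.lt
    · exact fun hyv => h (hy.le.trans hyv)

lemma chainSumTo_self : chainSumTo f v v = f v := by
  rw [chainSumTo_unfold, if_pos rfl, Finset.sum_eq_zero, mul_zero, add_zero]
  intro y hy
  simp only [mem_filter, mem_univ, true_and] at hy
  exact chainSumTo_eq_zero f v hy.lt.not_ge

lemma chainSumTo_unfold_last (x : P) :
    chainSumTo f v x
      = (if x = v then f v else 0) + (∑ y ∈ univ.filter (· ⋖ v), chainSumTo f y x) * f v := by
  induction x using WellFoundedGT.induction with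
  | _ x ih =>
    by_cases hxv : x = v
    · subst hxv
      rw [chainSumTo_self, if_pos rfl, Finset.sum_eq_zero, zero_mul, add_zero]
      intro y hy
      simp only [mem_filter, mem_univ, true_and] at hy
      exact chainSumTo_eq_zero f y hy.lt.not_ge
    have hlast : ∀ z ∈ univ.filter (x ⋖ ·), chainSumTo f v z
        = (if z = v then f v else 0) + (∑ y ∈ univ.filter (· ⋖ v), chainSumTo f y z) * f v :=
      fun z hz => ih z (mem_filter.1 hz).2.lt
    rw [chainSumTo_unfold f v x, if_neg hxv, if_neg hxv, zero_add, zero_add,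
      Finset.sum_congr rfl hlast, Finset.sum_congr rfl fun y _ => chainSumTo_unfold f y x]
    simp only [Finset.sum_add_distrib, Finset.sum_ite_eq', Finset.sum_ite_eq, mem_filter,
      mem_univ, true_and, ← Finset.sum_mul, ← Finset.mul_sum]
    rw [Finset.sum_comm]
    split_ifs <;> ring

end chainSumTo

section chainSumThrough

variable (f : P → ℝ) (v : P)

lemma chainSumThrough_self : chainSumThrough f v v = deltaInvMap f v := by
  unfold chainSumThrough chainSum deltaInvMap
  refine Finset.sum_congr rfl fun k _ => Finset.sum_congr ?_ fun _ _ => rfl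
  ext c
  simp only [mem_filter, mem_univ, true_and]
  exact ⟨fun ⟨hsc, hc0, hmax, _⟩ => ⟨hsc, hc0, hmax⟩,
    fun ⟨hsc, hc0, hmax⟩ => ⟨hsc, hc0, hmax, 0, hc0⟩⟩

lemma chainSumThrough_of_ne {x : P} (hxv : x ≠ v) :
    chainSumThrough f v x = f x * ∑ y ∈ univ.filter (x ⋖ ·), chainSumThrough f v y := by
  rw [chainSumThrough, chainSum_eq, if_neg, zero_add]
  · rintro ⟨-, j, hj⟩
    exact hxv hj
  · intro k c hc0 _
    simp [Fin.exists_fin_succ, hc0, hxv, Fin.tail, Fin.succ_last]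

lemma chainSumThrough_mul_eq_chainSumTo_mul (x : P) :
    chainSumThrough f v x * f v = chainSumTo f v x * deltaInvMap f v := by
  induction x using WellFoundedGT.induction with
  | _ x ih =>
    by_cases hxv : x = v
    · subst hxv
      rw [chainSumThrough_self, chainSumTo_self, mul_comm]
    · rw [chainSumThrough_of_ne f v hxv, chainSumTo_unfold, if_neg hxv, zero_add, mul_assoc,
        mul_assoc, Finset.sum_mul, Finset.sum_mul]
      congr 1
      exact Finset.sum_congr rfl fun y hy => ih y (mem_filter.1 hy).2.lt

end chainSumThrough

lemma upsilon_eq_sum_chainSumThrough (f : P → ℝ) (v : P) :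
    Upsilon f v = ∑ x ∈ univ.filter IsMin, chainSumThrough f v x := by
  simp only [Upsilon, chainSumThrough, chainSum]
  rw [Finset.sum_comm]
  refine Finset.sum_congr rfl fun k _ => ?_
  rw [← Finset.sum_fiberwise_of_maps_to (t := univ.filter IsMin) (g := fun c => c 0)
    (fun c hc => mem_filter.2 ⟨mem_univ _, (mem_filter.1 hc).2.1.2.1⟩)]
  refine Finset.sum_congr rfl fun x hx => Finset.sum_congr ?_ fun _ _ => rfl
  ext c
  simp only [mem_filter, mem_univ, true_and] at hx ⊢
  constructor
  · rintro ⟨⟨⟨hsc, -, hmax⟩, hj⟩, rfl⟩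
    exact ⟨hsc, rfl, hmax, hj⟩
  · rintro ⟨hsc, rfl, hmax, hj⟩
    exact ⟨⟨⟨hsc, hx, hmax⟩, hj⟩, rfl⟩

/-- The inverse `∇⁻¹` of the down transfer: the sum, over saturated chains
`0̂ ⋖ y₁ ⋖ ⋯ ⋖ y_k = v` of `P̂`, of `f(y₁)⋯f(y_k)`. -/
noncomputable def nablaInvMap (f : P → ℝ) (v : P) : ℝ :=
  ∑ x ∈ univ.filter IsMin, chainSumTo f v x

lemma nablaInvMap_eq_mul_lowSum (f : P → ℝ) (v : P) :
    nablaInvMap f v = f v * lowSum (nablaInvMap f) v := by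
  rw [nablaInvMap, Finset.sum_congr rfl fun x _ => chainSumTo_unfold_last f v x, lowSum]
  simp only [Finset.sum_add_distrib, Finset.sum_ite_eq', mem_filter, mem_univ, true_and,
    ← Finset.sum_mul, nablaInvMap]
  rw [Finset.sum_comm]
  split_ifs <;> ring

lemma upsilon_mul_eq_nablaInvMap_mul_deltaInvMap (f : P → ℝ) (v : P) :
    Upsilon f v * f v = nablaInvMap f v * deltaInvMap f v := by
  rw [upsilon_eq_sum_chainSumThrough, nablaInvMap, Finset.sum_mul, Finset.sum_mul]
  exact Finset.sum_congr rfl fun x _ => chainSumThrough_mul_eq_chainSumTo_mul f v x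

lemma lowSum_congr {f f' : P → ℝ} {x : P} (h : ∀ y, y ⋖ x → f y = f' y) :
    lowSum f x = lowSum f' x := by
  unfold lowSum
  congr 1
  exact Finset.sum_congr rfl fun y hy => h y (mem_filter.1 hy).2

lemma lowSum_pos {f : P → ℝ} {x : P} (hf : ∀ y, y ⋖ x → 0 < f y) : 0 < lowSum f x := by
  have hnonneg : ∀ y ∈ univ.filter (· ⋖ x), 0 ≤ f y := fun y hy => (hf y (mem_filter.1 hy).2).le
  unfold lowSum
  by_cases hx : IsMin x
  · rw [if_pos hx]
    exact add_pos_of_pos_of_nonneg one_pos (Finset.sum_nonneg hnonneg)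
  · obtain ⟨y, hy⟩ := exists_covBy_of_wellFoundedGT hx
    rw [if_neg hx, zero_add]
    exact Finset.sum_pos' hnonneg ⟨y, mem_filter.2 ⟨mem_univ _, hy⟩, hf y hy⟩

lemma deltaInvMap_pos {f : P → ℝ} (hf : ∀ x, 0 < f x) (x : P) : 0 < deltaInvMap f x := by
  induction x using WellFoundedGT.induction with
  | _ x ih =>
    have hnonneg : ∀ y ∈ univ.filter (x ⋖ ·), 0 ≤ deltaInvMap f y :=
      fun y hy => (ih y (mem_filter.1 hy).2.lt).le
    rw [deltaInvMap_unfold]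
    by_cases hx : IsMax x
    · rw [if_pos hx]
      exact add_pos_of_pos_of_nonneg (hf x) (mul_nonneg (hf x).le (Finset.sum_nonneg hnonneg))
    · obtain ⟨y, hy⟩ := exists_covBy_of_wellFoundedLT hx
      rw [if_neg hx, zero_add]
      exact mul_pos (hf x) (Finset.sum_pos' hnonneg ⟨y, mem_filter.2 ⟨mem_univ _, hy⟩, ih y hy.lt⟩)

lemma deltaInvMap_congr {f f' : P → ℝ} {x : P} (h : ∀ y, x ≤ y → f y = f' y) :
    deltaInvMap f x = deltaInvMap f' x := by
  induction x using WellFoundedGT.induction with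
  | _ x ih =>
    rw [deltaInvMap_unfold, deltaInvMap_unfold f', h x le_rfl]
    congr 2
    refine Finset.sum_congr rfl fun y hy => ih y (mem_filter.1 hy).2.lt fun z hz => h z ?_
    exact (mem_filter.1 hy).2.le.trans hz

lemma nablaInvMap_congr {f f' : P → ℝ} {x : P} (h : ∀ y ≤ x, f y = f' y) :
    nablaInvMap f x = nablaInvMap f' x := by
  induction x using WellFoundedLT.induction with
  | _ x ih =>
    rw [nablaInvMap_eq_mul_lowSum, nablaInvMap_eq_mul_lowSum f', h x le_rfl]
    congr 1
    exact lowSum_congr fun y hy => ih y hy.lt fun z hz => h z (hz.trans hy.le)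

lemma nablaInvMap_nablaMap {f : P → ℝ} (hf : ∀ x, lowSum f x ≠ 0) (x : P) :
    nablaInvMap (nablaMap f) x = f x := by
  induction x using WellFoundedLT.induction with
  | _ x ih =>
    rw [nablaInvMap_eq_mul_lowSum, lowSum_congr fun y hy => ih y hy.lt, nablaMap,
      div_mul_cancel₀ _ (hf x)]

lemma upsilon_eq_of_eq_nablaMap {f g h : P → ℝ} {v : P} (hf : ∀ x, lowSum f x ≠ 0)
    (hlt : ∀ y < v, h y = nablaMap f y) (hge : ∀ y, v ≤ y → h y = g y) (hv : h v ≠ 0) :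
    Upsilon h v = lowSum f v * deltaInvMap g v := by
  have hnabla : nablaInvMap h v = h v * lowSum f v := by
    rw [nablaInvMap_eq_mul_lowSum]
    congr 1
    refine lowSum_congr fun y hy => ?_
    rw [nablaInvMap_congr fun z hz => hlt z (hz.trans_lt hy.lt), nablaInvMap_nablaMap hf]
  have hmul := upsilon_mul_eq_nablaInvMap_mul_deltaInvMap h v
  rw [hnabla, deltaInvMap_congr hge] at hmul
  apply mul_right_cancel₀ hv
  rw [hmul]
  ring

lemma atog_self_eq_nablaMap {C : ℝ} (hC : 0 < C) {g h : P → ℝ} (hg : ∀ x, 0 < g x) {v : P}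
    (hlt : ∀ y < v, h y = nablaMap (thetaMap C (deltaInvMap g)) y)
    (hge : ∀ y, v ≤ y → h y = g y) :
    atog C v h v = nablaMap (thetaMap C (deltaInvMap g)) v := by
  have hlow : ∀ x, lowSum (thetaMap C (deltaInvMap g)) x ≠ 0 :=
    fun x => (lowSum_pos fun y _ => div_pos hC (deltaInvMap_pos hg y)).ne'
  have hv : h v ≠ 0 := (hge v le_rfl).symm ▸ (hg v).ne'
  rw [atog, if_pos rfl, upsilon_eq_of_eq_nablaMap hlow hlt hge hv, mul_comm, ← div_div]
  rfl

namespace IsLinearExtension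

omit [Fintype P]

lemma pairwise {l : List P} (hl : IsLinearExtension l) : l.Pairwise (fun a b => ¬ b < a) :=
  List.pairwise_iff_getElem.2 fun i j hi hj hij hlt => (hl.2.2 j i hj hi hlt).not_gt hij

variable {l₁ l₂ : List P} {v : P} (hl : IsLinearExtension (l₁ ++ v :: l₂))
include hl

lemma mem_left_of_lt {y : P} (hy : y < v) : y ∈ l₁ := by
  rcases List.mem_append.1 (hl.2.1 y) with h | h
  · exact h
  · rcases List.mem_cons.1 h with rfl | h
    · exact absurd hy (lt_irrefl _)
    · exact absurd hy (List.rel_of_pairwise_cons (List.pairwise_append.1 hl.pairwise).2.1 h)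

lemma notMem_left_of_le {y : P} (hy : v ≤ y) : y ∉ l₁ := fun hy₁ =>
  (List.pairwise_append.1 hl.pairwise).2.2 y hy₁ v List.mem_cons_self
    (hy.lt_of_ne ((List.nodup_append.1 hl.1).2.2 y hy₁ v List.mem_cons_self).symm)

end IsLinearExtension

theorem applyATogs_eq_ite_mem {C : ℝ} (hC : 0 < C) {g : P → ℝ} (hg : ∀ x, 0 < g x)
    {l₁ l₂ : List P} (hl : IsLinearExtension (l₁ ++ l₂)) :
    applyATogs C l₁ g =
      fun x => if x ∈ l₁ then nablaMap (thetaMap C (deltaInvMap g)) x else g x := by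
  induction l₁ using List.reverseRecOn generalizing l₂ with
  | nil =>
    funext x
    simp [applyATogs]
  | append_singleton l₁ v ih =>
    rw [List.append_assoc, List.singleton_append] at hl
    simp only [applyATogs, List.foldl_append, List.foldl_cons, List.foldl_nil]
    rw [← applyATogs, ih hl]
    funext x
    by_cases hxv : x = v
    · subst hxv
      rw [if_pos (List.mem_append_right _ (List.mem_singleton_self x))]
      exact atog_self_eq_nablaMap hC hg (fun y hy => if_pos (hl.mem_left_of_lt hy))
        (fun y hy => if_neg (hl.notMem_left_of_le hy))
    · simp [atog, hxv]

/-- For any linear extension `(x₁,…,xₙ)` of `P`, birational antichain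
rowmotion `BAR = τ_{xₙ} ∘ ⋯ ∘ τ_{x₂} ∘ τ_{x₁}` equals the composition `∇ ∘ Θ ∘ Δ⁻¹` of
the birational transfer maps, on positive labelings. -/
theorem BAR_eq_nabla_theta_deltaInv (C : ℝ) (hC : 0 < C)
    (l : List P) (hl : IsLinearExtension l)
    (g : P → ℝ) (hg : ∀ x, 0 < g x) :
    applyATogs C l g = nablaMap (thetaMap C (deltaInvMap g)) := by
  rw [applyATogs_eq_ite_mem hC hg (l₂ := []) (by rwa [List.append_nil])]
  funext x
  exact if_pos (hl.2.1 x)
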